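/- Let |q|<1, and let A_N denote the N-th numerator convergent of the continued fraction H(a,b,c,d,q), defined by the recurrences A_0 = 0, A_1 = 1, A_{N+1} = (a + b + d q^N) A_N + (-ab + c q^N) A_{N-1} for N ≥ 1. Then A_N = Σ_{j,l,n ≥ 0} a^j b^{N-1-n-j-l} c^l d^{n-l} q^{n(n+1)/2 + l(l+1)/2} · [n+j choose j]_q · [N-1-j-l choose n]_q · [n choose l]_q, where the sum is over triples with l ≤ n and l + j + n ≤ N - 1 (the Gaussian binomials vanish otherwise). -/

import Mathlib

/-!
Write `r = N - 1 - n - j - l` for the exponent of `b`. The summand then factors as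
`a^j [n+j, j]_q · b^r [n+r, r]_q · c^l d^(n-l) q^(n(n+1)/2 + l(l+1)/2) [n, l]_q`, and `A_N` is
its sum over the tuples `(n, j, l, r)` of weight `N - 1`. In the recurrence, multiplying by `a`,
`b`, `ab`, `d`, `c` shifts these tuples. The operator `(1 - a S_j)(1 - b S_r)` acts on the first
two factors, and by the q-Pascal rule it lowers `n` by one there at the cost of `q^(j+r)`; the
q-Pascal rule for `[n, l]_q` splits what is left into the `d q^N` and `c q^N` terms. So the sum
satisfies the same second-order recurrence and initial values as `A_N`.
-/

open Finset

/-- The Gaussian binomial coefficient `[n choose m]_q` as a complex number. -/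
noncomputable def qbinom (q : ℂ) (n m : ℕ) : ℂ :=
  if m ≤ n then
    (∏ k ∈ range n, (1 - q ^ (k + 1))) /
      ((∏ k ∈ range m, (1 - q ^ (k + 1))) * ∏ k ∈ range (n - m), (1 - q ^ (k + 1)))
  else 0

open Finset.Nat

section QBinom

variable {q : ℂ}

noncomputable def qfac (q : ℂ) (n : ℕ) : ℂ := ∏ k ∈ range n, (1 - q ^ (k + 1))

theorem qfac_succ (q : ℂ) (n : ℕ) : qfac q (n + 1) = qfac q n * (1 - q ^ (n + 1)) :=
  prod_range_succ _ n

theorem qfac_zero (q : ℂ) : qfac q 0 = 1 := prod_range_zero _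

theorem one_sub_pow_succ_ne_zero (hq : ¬IsOfFinOrder q) (k : ℕ) : 1 - q ^ (k + 1) ≠ 0 :=
  fun h => hq (isOfFinOrder_iff_pow_eq_one.2 ⟨k + 1, k.succ_pos, (sub_eq_zero.1 h).symm⟩)

theorem qfac_ne_zero (hq : ¬IsOfFinOrder q) (n : ℕ) : qfac q n ≠ 0 :=
  prod_ne_zero_iff.2 fun k _ => one_sub_pow_succ_ne_zero hq k

theorem qbinom_of_le (q : ℂ) {n m : ℕ} (h : m ≤ n) :
    qbinom q n m = qfac q n / (qfac q m * qfac q (n - m)) :=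
  if_pos h

theorem qbinom_of_lt (q : ℂ) {n m : ℕ} (h : n < m) : qbinom q n m = 0 :=
  if_neg (Nat.not_le.2 h)

theorem qbinom_zero_right (hq : ¬IsOfFinOrder q) (n : ℕ) : qbinom q n 0 = 1 := by
  rw [qbinom_of_le q n.zero_le, Nat.sub_zero, qfac_zero, one_mul,
    div_self (qfac_ne_zero hq n)]

theorem qbinom_self (hq : ¬IsOfFinOrder q) (n : ℕ) : qbinom q n n = 1 := by
  rw [qbinom_of_le q le_rfl, Nat.sub_self, qfac_zero, mul_one,
    div_self (qfac_ne_zero hq n)]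

theorem qbinom_symm_add (q : ℂ) (m k : ℕ) : qbinom q (m + k) m = qbinom q (m + k) k := by
  rw [qbinom_of_le q (Nat.le_add_right m k), qbinom_of_le q (Nat.le_add_left k m),
    Nat.add_sub_cancel_left, Nat.add_sub_cancel, mul_comm]

theorem qbinom_succ_succ (hq : ¬IsOfFinOrder q) (n m : ℕ) :
    qbinom q (n + 1) (m + 1) = qbinom q n m + q ^ (m + 1) * qbinom q n (m + 1) := by
  rcases lt_trichotomy m n with h | rfl | h
  · obtain ⟨u, rfl⟩ := Nat.exists_eq_add_of_lt h
    rw [qbinom_of_le q (by omega), qbinom_of_le q (by omega), qbinom_of_le q (by omega),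
      show m + u + 1 + 1 - (m + 1) = u + 1 by omega, show m + u + 1 - m = u + 1 by omega,
      show m + u + 1 - (m + 1) = u by omega, qfac_succ q (m + u + 1), qfac_succ q m,
      qfac_succ q u]
    have hm := one_sub_pow_succ_ne_zero hq m
    have hu := one_sub_pow_succ_ne_zero hq u
    have hm' := qfac_ne_zero hq m
    have hu' := qfac_ne_zero hq u
    have hmu := qfac_ne_zero hq (m + u + 1)
    field_simp
    ring
  · rw [qbinom_self hq, qbinom_self hq, qbinom_of_lt q (Nat.lt_succ_self m), mul_zero, add_zero]
  · rw [qbinom_of_lt q (by omega), qbinom_of_lt q h, qbinom_of_lt q (by omega)]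
    ring

end QBinom

theorem succ_mul_succ_succ_div_two (n : ℕ) :
    (n + 1) * (n + 1 + 1) / 2 = n * (n + 1) / 2 + (n + 1) := by
  rw [show (n + 1) * (n + 1 + 1) = n * (n + 1) + 2 * (n + 1) by ring,
    Nat.add_mul_div_left _ _ two_pos]

section Weights

variable {q : ℂ}

/-- The coefficient of `x^j` in `1 / (a x; q)_(n+1)`. -/
noncomputable def invPochCoeff (q a : ℂ) (n j : ℕ) : ℂ := a ^ j * qbinom q (n + j) j

theorem invPochCoeff_zero_left (hq : ¬IsOfFinOrder q) (a : ℂ) (j : ℕ) :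
    invPochCoeff q a 0 j = a ^ j := by
  rw [invPochCoeff, Nat.zero_add, qbinom_self hq, mul_one]

theorem invPochCoeff_zero_right (hq : ¬IsOfFinOrder q) (a : ℂ) (n : ℕ) :
    invPochCoeff q a n 0 = 1 := by
  rw [invPochCoeff, pow_zero, qbinom_zero_right hq, mul_one]

theorem invPochCoeff_succ_succ (hq : ¬IsOfFinOrder q) (a : ℂ) (n j : ℕ) :
    invPochCoeff q a (n + 1) (j + 1) =
      a * invPochCoeff q a (n + 1) j + q ^ (j + 1) * invPochCoeff q a n (j + 1) := by
  simp only [invPochCoeff]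
  rw [show n + 1 + (j + 1) = n + 1 + j + 1 by omega, qbinom_succ_succ hq,
    show n + 1 + j = n + (j + 1) by omega]
  ring

noncomputable def cdWeight (q c d : ℂ) (n l : ℕ) : ℂ :=
  c ^ l * d ^ (n - l) * q ^ (n * (n + 1) / 2 + l * (l + 1) / 2) * qbinom q n l

theorem cdWeight_zero_zero (hq : ¬IsOfFinOrder q) (c d : ℂ) : cdWeight q c d 0 0 = 1 := by
  simp [cdWeight, qbinom_self hq]

theorem cdWeight_zero_succ (q c d : ℂ) (l : ℕ) : cdWeight q c d 0 (l + 1) = 0 := by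
  rw [cdWeight, qbinom_of_lt q l.succ_pos, mul_zero]

theorem cdWeight_succ_zero (hq : ¬IsOfFinOrder q) (c d : ℂ) (n : ℕ) :
    cdWeight q c d (n + 1) 0 = q ^ (n + 1) * d * cdWeight q c d n 0 := by
  simp only [cdWeight, qbinom_zero_right hq, succ_mul_succ_succ_div_two, Nat.sub_zero]
  ring

theorem cdWeight_succ_succ (hq : ¬IsOfFinOrder q) (c d : ℂ) (n l : ℕ) :
    cdWeight q c d (n + 1) (l + 1) =
      q ^ (n + l + 2) * (d * cdWeight q c d n (l + 1) + c * cdWeight q c d n l) := by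
  simp only [cdWeight, qbinom_succ_succ hq, succ_mul_succ_succ_div_two, Nat.add_sub_add_right]
  rcases lt_or_ge l n with h | h
  · rw [show n - l = n - (l + 1) + 1 by omega]
    ring
  · rw [qbinom_of_lt q (by omega : n < l + 1)]
    ring

end Weights

section TupleSums

variable {M : Type*} [AddCommMonoid M] {k : ℕ}

theorem sum_antidiagonalTuple_succ (n : ℕ) (f : (Fin (k + 1) → ℕ) → M) :
    ∑ x ∈ antidiagonalTuple (k + 1) n, f x =
      ∑ p ∈ antidiagonal n, ∑ y ∈ antidiagonalTuple k p.2, f (Fin.cons p.1 y) := by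
  change (Multiset.map f ↑(List.Nat.antidiagonalTuple (k + 1) n)).sum =
    (Multiset.map (fun p : ℕ × ℕ => (Multiset.map (fun y => f (Fin.cons p.1 y))
      ↑(List.Nat.antidiagonalTuple k p.2)).sum) ↑(List.Nat.antidiagonal n)).sum
  simp only [Multiset.map_coe, Multiset.sum_coe, List.Nat.antidiagonalTuple, List.flatMap,
    List.map_flatten, List.sum_flatten, List.map_map, Function.comp_def]

theorem sum_antidiagonalTuple_four (n : ℕ) (f : (Fin 4 → ℕ) → M) :
    ∑ x ∈ antidiagonalTuple 4 n, f x =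
      ∑ i ∈ range (n + 1), ∑ j ∈ range (n + 1 - i), ∑ l ∈ range (n + 1 - i - j),
        f ![i, j, l, n - i - j - l] := by
  simp only [sum_antidiagonalTuple_succ, antidiagonalTuple_one, sum_singleton,
    Nat.sum_antidiagonal_eq_sum_range_succ_mk]
  refine sum_congr rfl fun i hi => ?_
  rw [mem_range] at hi
  rw [show n + 1 - i = n - i + 1 by omega]
  refine sum_congr rfl fun j hj => ?_
  rw [mem_range] at hj
  rw [show n - i + 1 - j = n - i - j + 1 by omega]
  rfl

def shiftBy (v : Fin k → ℕ) (f : (Fin k → ℕ) → M) (x : Fin k → ℕ) : M :=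
  if ∀ i, v i ≤ x i then f (x - v) else 0

/-- Shifted by one to match `A_N`, whose terms have weight `N - 1`. -/
def levelSum (f : (Fin k → ℕ) → M) : ℕ → M
  | 0 => 0
  | n + 1 => ∑ x ∈ antidiagonalTuple k n, f x

theorem sum_shiftBy (v : Fin k → ℕ) (f : (Fin k → ℕ) → M) (n : ℕ) :
    ∑ x ∈ antidiagonalTuple k n, shiftBy v f x = levelSum f (n + 1 - ∑ i, v i) := by
  by_cases h : ∑ i, v i ≤ n
  · obtain ⟨m, rfl⟩ := Nat.exists_eq_add_of_le' h
    rw [Nat.add_right_comm, Nat.add_sub_cancel, levelSum]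
    unfold shiftBy
    rw [← sum_filter]
    refine sum_nbij' (· - v) (· + v) ?_ ?_ ?_ ?_ (fun _ _ => rfl)
    · intro x hx
      simp only [mem_filter, mem_antidiagonalTuple] at hx ⊢
      rw [Pi.sub_def, sum_tsub_distrib _ fun i _ => hx.2 i, hx.1, Nat.add_sub_cancel]
    · intro y hy
      simp only [mem_filter, mem_antidiagonalTuple] at hy ⊢
      exact ⟨by rw [Pi.add_def, sum_add_distrib, hy], fun i => Nat.le_add_left (v i) (y i)⟩
    · intro x hx
      rw [mem_filter] at hx
      exact tsub_add_cancel_of_le hx.2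
    · intro y _
      exact add_tsub_cancel_right y v
  · rw [show n + 1 - ∑ i, v i = 0 by omega, levelSum]
    refine sum_eq_zero fun x hx => if_neg fun hle => h ?_
    rw [← mem_antidiagonalTuple.1 hx]
    exact sum_le_sum fun i _ => hle i

end TupleSums

section Numerator

variable {q : ℂ}

noncomputable def numeratorTerm (q a b c d : ℂ) (x : Fin 4 → ℕ) : ℂ :=
  invPochCoeff q a (x 0) (x 1) * invPochCoeff q b (x 0) (x 3) * cdWeight q c d (x 0) (x 2)

theorem numeratorTerm_eq_shiftBy (hq : ¬IsOfFinOrder q) (a b c d : ℂ) (x : Fin 4 → ℕ)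
    (hx : x ≠ 0) :
    numeratorTerm q a b c d x =
      b * shiftBy ![0, 0, 0, 1] (numeratorTerm q a b c d) x
        + a * shiftBy ![0, 1, 0, 0] (numeratorTerm q a b c d) x
        - a * b * shiftBy ![0, 1, 0, 1] (numeratorTerm q a b c d) x
        + d * q ^ (∑ i, x i) * shiftBy ![1, 0, 0, 0] (numeratorTerm q a b c d) x
        + c * q ^ (∑ i, x i) * shiftBy ![1, 0, 1, 0] (numeratorTerm q a b c d) x := by
  obtain ⟨n, j, l, r, rfl⟩ : ∃ n j l r, x = ![n, j, l, r] :=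
    ⟨x 0, x 1, x 2, x 3, by ext i; fin_cases i <;> rfl⟩
  simp only [shiftBy, numeratorTerm, Fin.forall_fin_succ, Fin.sum_univ_four]
  simp only [ne_eq, Matrix.cons_eq_zero_iff, Matrix.zero_empty, and_true] at hx
  rcases n with _ | n <;> rcases j with _ | j <;> rcases l with _ | l <;> rcases r with _ | r <;>
    simp [invPochCoeff_zero_left hq, invPochCoeff_zero_right hq, invPochCoeff_succ_succ hq,
      cdWeight_zero_zero hq, cdWeight_zero_succ, cdWeight_succ_zero hq, cdWeight_succ_succ hq,
      -mul_eq_mul_left_iff, -mul_eq_mul_right_iff] at hx ⊢ <;>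
    ring

theorem levelSum_numeratorTerm_one (hq : ¬IsOfFinOrder q) (a b c d : ℂ) :
    levelSum (numeratorTerm q a b c d) 1 = 1 := by
  simp [levelSum, antidiagonalTuple_zero_right, numeratorTerm, invPochCoeff_zero_right hq,
    cdWeight_zero_zero hq]

theorem levelSum_numeratorTerm_succ (hq : ¬IsOfFinOrder q) (a b c d : ℂ) {N : ℕ} (hN : 1 ≤ N) :
    levelSum (numeratorTerm q a b c d) (N + 1) =
      (a + b + d * q ^ N) * levelSum (numeratorTerm q a b c d) N +
        (-(a * b) + c * q ^ N) * levelSum (numeratorTerm q a b c d) (N - 1) := by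
  set T := numeratorTerm q a b c d
  calc levelSum T (N + 1)
      = ∑ x ∈ antidiagonalTuple 4 N,
          (b * shiftBy ![0, 0, 0, 1] T x + a * shiftBy ![0, 1, 0, 0] T x
            - a * b * shiftBy ![0, 1, 0, 1] T x + d * q ^ N * shiftBy ![1, 0, 0, 0] T x
            + c * q ^ N * shiftBy ![1, 0, 1, 0] T x) := by
        refine sum_congr rfl fun x hx => ?_
        rw [mem_antidiagonalTuple] at hx
        have := numeratorTerm_eq_shiftBy hq a b c d x (by rintro rfl; simp at hx; omega)
        rwa [hx] at this
    _ = b * levelSum T N + a * levelSum T N - a * b * levelSum T (N - 1)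
          + d * q ^ N * levelSum T N + c * q ^ N * levelSum T (N - 1) := by
        simp only [sum_add_distrib, sum_sub_distrib, ← mul_sum, sum_shiftBy, Fin.sum_univ_four]
        simp
    _ = _ := by ring

end Numerator

theorem eq_of_second_order_recurrence {R : Type*} [Add R] [Mul R] {u v α β : ℕ → R}
    (h0 : u 0 = v 0) (h1 : u 1 = v 1)
    (hu : ∀ N, 1 ≤ N → u (N + 1) = α N * u N + β N * u (N - 1))
    (hv : ∀ N, 1 ≤ N → v (N + 1) = α N * v N + β N * v (N - 1)) : u = v := by
  suffices h : ∀ N, u N = v N ∧ u (N + 1) = v (N + 1) from funext fun N => (h N).1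
  intro N
  induction N with
  | zero => exact ⟨h0, h1⟩
  | succ N ih =>
    refine ⟨ih.2, ?_⟩
    rw [hu (N + 1) N.succ_pos, hv (N + 1) N.succ_pos, Nat.add_sub_cancel, ih.1, ih.2]

theorem levelSum_numeratorTerm_eq (q a b c d : ℂ) (N : ℕ) :
    levelSum (numeratorTerm q a b c d) N =
      ∑ n ∈ range N, ∑ j ∈ range (N - n), ∑ l ∈ range (N - n - j),
        a ^ j * b ^ (N - 1 - n - j - l) * c ^ l * d ^ (n - l) *
          q ^ (n * (n + 1) / 2 + l * (l + 1) / 2) *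
          qbinom q (n + j) j * qbinom q (N - 1 - j - l) n * qbinom q n l := by
  rcases N with _ | D
  · rfl
  rw [levelSum, sum_antidiagonalTuple_four]
  refine sum_congr rfl fun n _ => sum_congr rfl fun j _ => sum_congr rfl fun l hl => ?_
  rw [mem_range] at hl
  rw [show D + 1 - 1 - j - l = n + (D - n - j - l) by omega, qbinom_symm_add]
  simp only [numeratorTerm, invPochCoeff, cdWeight, Matrix.cons_val, Nat.add_sub_cancel]
  ring

/-- Explicit formula for the numerator convergents of `H(a,b,c,d,q)`:
`A_N = Σ_{j,l,n} a^j b^{N-1-n-j-l} c^l d^{n-l} q^{n(n+1)/2+l(l+1)/2}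
[n+j, j]_q [N-1-j-l, n]_q [n, l]_q`, summed over `n + j + l ≤ N - 1` (and `l ≤ n`,
enforced by the vanishing of `[n, l]_q`). -/
theorem stmt11 (q a b c d : ℂ) (hq : ‖q‖ < 1) (A : ℕ → ℂ)
    (hA0 : A 0 = 0) (hA1 : A 1 = 1)
    (hArec : ∀ N : ℕ, 1 ≤ N →
      A (N + 1) = (a + b + d * q ^ N) * A N + (-(a * b) + c * q ^ N) * A (N - 1)) :
    ∀ N : ℕ,
      A N = ∑ n ∈ range N, ∑ j ∈ range (N - n), ∑ l ∈ range (N - n - j),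
        a ^ j * b ^ (N - 1 - n - j - l) * c ^ l * d ^ (n - l) *
          q ^ (n * (n + 1) / 2 + l * (l + 1) / 2) *
          qbinom q (n + j) j * qbinom q (N - 1 - j - l) n * qbinom q n l := by
  have hq' : ¬IsOfFinOrder q := fun h => hq.ne h.norm_eq_one
  have hA : A = levelSum (numeratorTerm q a b c d) :=
    eq_of_second_order_recurrence hA0 (hA1.trans (levelSum_numeratorTerm_one hq' a b c d).symm)
      hArec fun N hN => levelSum_numeratorTerm_succ hq' a b c d hN
  intro N
  rw [hA, levelSum_numeratorTerm_eq]
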